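/- Let f : ℕ+ → [0,1] and let Λ_f be the envelope class defined by f. Then for every positive integer n, R+(Λ_f^n) < ∞ if and only if R*(Λ_f^n) < ∞. -/

import Mathlib

open scoped ENNReal BigOperators

noncomputable section

/-- `p` is a probability mass function on `α`. -/
def IsPmf {α : Type*} (p : α → ℝ) : Prop := (∀ a, 0 ≤ p a) ∧ HasSum p 1

/-- The `n`-fold product probability mass function. -/
def prodPmf {α : Type*} (p : α → ℝ) (n : ℕ) : (Fin n → α) → ℝ :=
  fun x => ∏ i, p (x i)

/-- base-2 logarithm of the ratio `a / b`, valued in `[0,∞]`: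
it is `⊤` when `b = 0 < a`, and clipped at `0` from below (which does not affect
the suprema defining minimax regret, which are always nonnegative). -/
def regretTerm (a b : ℝ) : ℝ≥0∞ :=
  if a ≤ 0 then 0 else if b ≤ 0 then ⊤ else ENNReal.ofReal (Real.logb 2 (a / b))

/-- Minimax regret (base 2) of the class `Λ` for word length `n`, valued in `[0,∞]`. -/
def minimaxRegret {α : Type*} (Λ : Set (α → ℝ)) (n : ℕ) : ℝ≥0∞ :=
  ⨅ (Q : (Fin n → α) → ℝ) (_ : IsPmf Q),
    ⨆ (x : Fin n → α), ⨆ P ∈ Λ, regretTerm (prodPmf P n x) (Q x)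

/- Kullback-Leibler divergence `D(p‖q)` in base 2, valued in `[0,∞]`.
It is `⊤` unless `q` dominates `p`; otherwise it is computed through the
pointwise-nonnegative decomposition `p log(p/q) + q - p` (summing to
`Σ p log(p/q)` since `Σ p = Σ q = 1`), converted from nats to bits. -/
open Classical in
def klDiv2 {α : Type*} (p q : α → ℝ) : ℝ≥0∞ :=
  if ∃ a, q a = 0 ∧ 0 < p a then ⊤
  else (∑' a, ENNReal.ofReal (p a * Real.log (p a / q a) + q a - p a)) /
       ENNReal.ofReal (Real.log 2)

/-- Minimax redundancy (base 2) of the class `Λ` for word length `n`, valued in `[0,∞]`. -/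
def minimaxRedundancy {α : Type*} (Λ : Set (α → ℝ)) (n : ℕ) : ℝ≥0∞ :=
  ⨅ (Q : (Fin n → α) → ℝ) (_ : IsPmf Q), ⨆ P ∈ Λ, klDiv2 (prodPmf P n) Q

/-- The envelope class defined by the envelope function `f`. -/
def envClass (f : ℕ+ → ℝ) : Set (ℕ+ → ℝ) := {P | IsPmf P ∧ ∀ k, P k ≤ f k}

/-!
Regret controls redundancy for every class: if `log (p/q) ≤ C` pointwise then
`p log (p/q) + q - p ≤ C p + q`, so `D(p‖q) ≤ C + 1/ln 2`. For the converse, finiteness of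
either quantity hinges on the summability of `f`. If `f` is summable, the envelope topped up by a
unit atom and normalized is a pmf whose `n`-fold product is within the factor `(∑ f + 1)^n` of
every `Pⁿ`, `P ∈ Λ_f`. If `f` is not summable, then for any `Q` pick a finite set `W` of words
carrying all but `ε` of its mass, and a finite set `A` of letters, none of them the first letter
of a word of `W`, with `∑_A f ≥ 1`. Then `P = f / ∑_A f` on `A` lies in `Λ_f`, `Pⁿ` lives on
`Aⁿ`, `Q(Aⁿ) < ε`, and `D(Pⁿ‖Q) ≥ (-ln ε - 1)/ln 2` is unbounded.
-/

open Real Finset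

theorem exists_disjoint_one_le_sum_of_not_summable {β : Type*} [DecidableEq β] {u : β → ℝ}
    (hu : ∀ b, 0 ≤ u b) (hns : ¬ Summable u) (T : Finset β) :
    ∃ A : Finset β, Disjoint A T ∧ 1 ≤ ∑ b ∈ A, u b := by
  by_contra! h
  refine hns (summable_of_sum_le (c := 1 + ∑ b ∈ T, u b) hu fun s => ?_)
  calc ∑ b ∈ s, u b ≤ ∑ b ∈ s \ T ∪ T, u b :=
        sum_le_sum_of_subset_of_nonneg (by simp +contextual [subset_iff]) fun b _ _ => hu b
    _ = ∑ b ∈ s \ T, u b + ∑ b ∈ T, u b := sum_union sdiff_disjoint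
    _ ≤ 1 + ∑ b ∈ T, u b := by linarith [h (s \ T) sdiff_disjoint]

section ProductPmf

variable {α : Type*}

theorem ENNReal.prod_univ_tsum {n : ℕ} (h : Fin n → α → ℝ≥0∞) :
    ∏ i, ∑' a, h i a = ∑' x : Fin n → α, ∏ i, h i (x i) := by
  induction n with
  | zero => simp
  | succ n ih =>
    rw [Fin.prod_univ_succ, ih, ← ENNReal.tsum_mul_right, ← (Fin.consEquiv fun _ => α).tsum_eq,
      ENNReal.tsum_prod']
    simp_rw [← ENNReal.tsum_mul_left, Fin.prod_univ_succ]
    rfl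

theorem isPmf_iff_tsum_ofReal {p : α → ℝ} :
    IsPmf p ↔ (∀ a, 0 ≤ p a) ∧ ∑' a, ENNReal.ofReal (p a) = 1 := by
  refine and_congr_right fun hp => ⟨fun h => ?_, fun h => ?_⟩
  · rw [← ENNReal.ofReal_tsum_of_nonneg hp h.summable, h.tsum_eq, ENNReal.ofReal_one]
  · have hs := ENNReal.hasSum_toReal (h ▸ ENNReal.one_ne_top : ∑' a, ENNReal.ofReal (p a) ≠ ⊤)
    rw [← ENNReal.tsum_toReal_eq fun _ => ENNReal.ofReal_ne_top, h, ENNReal.toReal_one] at hs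
    simpa [ENNReal.toReal_ofReal (hp _)] using hs

theorem prodPmf_nonneg {p : α → ℝ} (hp : ∀ a, 0 ≤ p a) (n : ℕ) (x : Fin n → α) :
    0 ≤ prodPmf p n x :=
  prod_nonneg fun i _ => hp (x i)

theorem IsPmf.prodPmf {p : α → ℝ} (hp : IsPmf p) (n : ℕ) : IsPmf (prodPmf p n) := by
  rw [isPmf_iff_tsum_ofReal] at hp ⊢
  refine ⟨prodPmf_nonneg hp.1 n, ?_⟩
  simp only [_root_.prodPmf, ENNReal.ofReal_prod_of_nonneg fun i _ => hp.1 _]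
  rw [← ENNReal.prod_univ_tsum fun _ a => ENNReal.ofReal (p a), hp.2, prod_const_one]

end ProductPmf

section Divergence

variable {α : Type*}

theorem regretTerm_le_of_le_mul {a b K : ℝ} (hK : 0 ≤ K) (h : a ≤ K * b) :
    regretTerm a b ≤ ENNReal.ofReal (logb 2 K) := by
  unfold regretTerm
  split_ifs with ha hb
  · exact zero_le
  · exact (ha (h.trans (mul_nonpos_of_nonneg_of_nonpos hK hb))).elim
  · rw [not_le] at ha hb
    exact ENNReal.ofReal_le_ofReal <|
      logb_le_logb_of_le one_lt_two (div_pos ha hb) ((div_le_iff₀ hb).2 h)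

theorem sub_mul_log_sub_div_le_mul_log_div {p q c : ℝ} (hp : 0 ≤ p) (hq : 0 ≤ q)
    (hpq : 0 < p → 0 < q) (hc : 0 < c) : p - p * log c - q / c ≤ p * log (p / q) := by
  rcases hp.eq_or_lt with rfl | hp
  · simp only [zero_sub, zero_mul]
    linarith [div_nonneg hq hc.le]
  have hq := hpq hp
  have h := mul_le_mul_of_nonneg_left
    (one_sub_inv_le_log_of_pos (show 0 < p / q * c by positivity)) hp.le
  rw [log_mul (by positivity) hc.ne', mul_sub, mul_add, mul_one,
    show p * (p / q * c)⁻¹ = q / c by field_simp] at h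
  linarith

theorem klDiv2_le_add_of_regretTerm_le {p q : α → ℝ} (hp : IsPmf p) (hq : IsPmf q)
    {C : ℝ≥0∞} (h : ∀ a, regretTerm (p a) (q a) ≤ C) :
    klDiv2 p q ≤ C + (ENNReal.ofReal (log 2))⁻¹ := by
  rcases eq_or_ne C ⊤ with rfl | hC
  · simp
  have hdom : ¬ ∃ a, q a = 0 ∧ 0 < p a := by
    rintro ⟨a, hqa, hpa⟩
    simpa [regretTerm, hqa, hpa.not_ge, hC] using h a
  set c := C.toReal
  have hlog2 : 0 < log 2 := log_pos one_lt_two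
  have hterm : ∀ a, p a * log (p a / q a) + q a - p a ≤ c * log 2 * p a + q a := by
    intro a
    rcases (hp.1 a).eq_or_lt with hpa | hpa
    · simp [← hpa]
    have hqa : 0 < q a := (hq.1 a).lt_of_ne fun h0 => hdom ⟨a, h0.symm, hpa⟩
    have hlogb : logb 2 (p a / q a) ≤ c := by
      have := h a
      rw [regretTerm, if_neg hpa.not_ge, if_neg hqa.not_ge, ← ENNReal.ofReal_toReal hC] at this
      exact (ENNReal.ofReal_le_ofReal_iff ENNReal.toReal_nonneg).1 this
    have : log (p a / q a) ≤ c * log 2 := by rwa [logb, div_le_iff₀ hlog2] at hlogb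
    nlinarith
  rw [klDiv2, if_neg hdom]
  calc (∑' a, ENNReal.ofReal (p a * log (p a / q a) + q a - p a)) / ENNReal.ofReal (log 2)
      ≤ (∑' a, (ENNReal.ofReal (c * log 2) * ENNReal.ofReal (p a) + ENNReal.ofReal (q a))) /
          ENNReal.ofReal (log 2) := by
        gcongr with a
        rw [← ENNReal.ofReal_mul (by positivity), ← ENNReal.ofReal_add (by
          have := hp.1 a; positivity) (hq.1 a)]
        exact ENNReal.ofReal_le_ofReal (hterm a)
    _ = (ENNReal.ofReal (c * log 2) + 1) / ENNReal.ofReal (log 2) := by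
        rw [ENNReal.tsum_add, ENNReal.tsum_mul_left, (isPmf_iff_tsum_ofReal.1 hp).2,
          (isPmf_iff_tsum_ofReal.1 hq).2, mul_one]
    _ = C + (ENNReal.ofReal (log 2))⁻¹ := by
        rw [ENNReal.add_div, ENNReal.ofReal_mul (by positivity), ENNReal.mul_div_cancel_right
          (by simpa using hlog2) ENNReal.ofReal_ne_top, ENNReal.ofReal_toReal hC, one_div]

theorem le_klDiv2_of_sum_le {p q : α → ℝ} (hp : ∀ a, 0 ≤ p a) (hq : ∀ a, 0 ≤ q a)
    {E : Finset α} (hE : ∑ a ∈ E, p a = 1) {ε : ℝ} (hqE : ∑ a ∈ E, q a ≤ ε) :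
    ENNReal.ofReal ((-log ε - 1) / log 2) ≤ klDiv2 p q := by
  classical
  by_cases hdom : ∃ a, q a = 0 ∧ 0 < p a
  · simp [klDiv2, hdom]
  have hpq : ∀ a, 0 < p a → 0 < q a := fun a hpa =>
    (hq a).lt_of_ne fun h => hdom ⟨a, h.symm, hpa⟩
  set c := ∑ a ∈ E, q a
  have hc : 0 < c := by
    obtain ⟨a, ha, hpa⟩ : ∃ a ∈ E, 0 < p a := by
      by_contra! h
      have := sum_eq_zero fun a ha => (h a ha).antisymm (hp a)
      linarith
    exact sum_pos' (fun a _ => hq a) ⟨a, ha, hpq a hpa⟩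
  have hsum : -log ε - 1 ≤ ∑ a ∈ E, (p a * log (p a / q a) + q a - p a) := calc
    -log ε - 1 ≤ -log c - 1 + c := by linarith [log_le_log hc hqE]
    _ = ∑ a ∈ E, (p a - p a * log c - q a / c + (q a - p a)) := by
      rw [sum_add_distrib, sum_sub_distrib, sum_sub_distrib, sum_sub_distrib, ← sum_mul, ← sum_div,
        hE, div_self hc.ne']
      ring
    _ ≤ _ := sum_le_sum fun a _ => by
      linarith [sub_mul_log_sub_div_le_mul_log_div (hp a) (hq a) (hpq a) hc]
  have hterm : ∀ a ∈ E, 0 ≤ p a * log (p a / q a) + q a - p a := fun a _ => by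
    have := sub_mul_log_sub_div_le_mul_log_div (hp a) (hq a) (hpq a) one_pos
    rw [log_one, mul_zero, div_one] at this
    linarith
  rw [klDiv2, if_neg hdom, ENNReal.ofReal_div_of_pos (log_pos one_lt_two)]
  gcongr
  calc ENNReal.ofReal (-log ε - 1)
      ≤ ENNReal.ofReal (∑ a ∈ E, (p a * log (p a / q a) + q a - p a)) :=
        ENNReal.ofReal_le_ofReal hsum
    _ = ∑ a ∈ E, ENNReal.ofReal (p a * log (p a / q a) + q a - p a) :=
        ENNReal.ofReal_sum_of_nonneg hterm
    _ ≤ _ := ENNReal.sum_le_tsum E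

theorem minimaxRedundancy_le_minimaxRegret_add {Λ : Set (α → ℝ)} (hΛ : ∀ P ∈ Λ, IsPmf P)
    (n : ℕ) : minimaxRedundancy Λ n ≤ minimaxRegret Λ n + (ENNReal.ofReal (log 2))⁻¹ := by
  simp only [minimaxRedundancy, minimaxRegret, ENNReal.iInf_add]
  refine iInf₂_mono fun Q hQ => iSup₂_le fun P hP => ?_
  exact klDiv2_le_add_of_regretTerm_le ((hΛ P hP).prodPmf n) hQ fun x =>
    le_iSup_of_le x (le_iSup₂_of_le P hP le_rfl)

end Divergence

section Envelope

variable {f : ℕ+ → ℝ}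

theorem minimaxRegret_envClass_lt_top (hf0 : ∀ k, 0 ≤ f k) (hf : Summable f) (n : ℕ) :
    minimaxRegret (envClass f) n < ⊤ := by
  set F := ∑' k, f k
  have hF : 0 < F + 1 := by linarith [(tsum_nonneg hf0 : 0 ≤ F)]
  set g : ℕ+ → ℝ := fun k => (f k + if k = 1 then 1 else 0) / (F + 1)
  have hg : IsPmf g := by
    refine ⟨fun k => by have := hf0 k; positivity, ?_⟩
    have := (hf.hasSum.add (hasSum_ite_eq 1 1) : HasSum _ (F + 1)).div_const (F + 1)
    rwa [div_self hF.ne'] at this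
  have hfg : ∀ k, f k ≤ (F + 1) * g k := fun k => by
    rw [mul_div_cancel₀ _ hF.ne']
    split_ifs <;> linarith
  refine (iInf₂_le (prodPmf g n) (hg.prodPmf n)).trans_lt <|
    (iSup_le fun x => iSup₂_le fun P hP => regretTerm_le_of_le_mul (K := (F + 1) ^ n)
      (by positivity) ?_).trans_lt ENNReal.ofReal_lt_top
  calc prodPmf P n x ≤ ∏ i, f (x i) := prod_le_prod (fun i _ => hP.1.1 _) fun i _ => hP.2 _
    _ ≤ ∏ i, (F + 1) * g (x i) := prod_le_prod (fun i _ => hf0 _) fun i _ => hfg _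
    _ = (F + 1) ^ n * prodPmf g n x := by
      rw [prod_mul_distrib, prod_const, card_univ, Fintype.card_fin, prodPmf]

theorem exists_mem_envClass_sum_eq_one (hf0 : ∀ k, 0 ≤ f k) {A : Finset ℕ+}
    (hA : 1 ≤ ∑ k ∈ A, f k) : ∃ P ∈ envClass f, ∑ k ∈ A, P k = 1 := by
  classical
  set s := ∑ k ∈ A, f k
  have hs : 0 < s := zero_lt_one.trans_le hA
  let P : ℕ+ → ℝ := fun k => if k ∈ A then f k / s else 0
  have hPA : ∑ k ∈ A, P k = 1 := by
    rw [sum_congr rfl fun k hk => if_pos hk, ← sum_div, div_self hs.ne']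
  refine ⟨P, ⟨⟨fun k => ?_, ?_⟩, fun k => ?_⟩, hPA⟩
  · dsimp only [P]
    split_ifs
    exacts [div_nonneg (hf0 k) hs.le, le_rfl]
  · exact hPA ▸ hasSum_sum_of_ne_finset_zero fun k hk => if_neg hk
  · dsimp only [P]
    split_ifs
    exacts [div_le_self (hf0 k) hA, hf0 k]

theorem exists_mem_envClass_sum_prodPmf_eq_one_sum_lt (hf0 : ∀ k, 0 ≤ f k)
    (hns : ¬ Summable f) {n : ℕ} (hn : 1 ≤ n) {Q : (Fin n → ℕ+) → ℝ} (hQ : Summable Q)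
    {ε : ℝ} (hε : 0 < ε) :
    ∃ P ∈ envClass f, ∃ E : Finset (Fin n → ℕ+),
      ∑ x ∈ E, prodPmf P n x = 1 ∧ ∑ x ∈ E, Q x < ε := by
  classical
  obtain ⟨W, hW⟩ := summable_iff_vanishing.1 hQ _ (Iio_mem_nhds hε)
  let i₀ : Fin n := ⟨0, hn⟩
  obtain ⟨A, hAW, hA⟩ :=
    exists_disjoint_one_le_sum_of_not_summable hf0 hns (W.image fun x => x i₀)
  obtain ⟨P, hP, hPA⟩ := exists_mem_envClass_sum_eq_one hf0 hA
  refine ⟨P, hP, Fintype.piFinset fun _ => A, ?_, hW _ ?_⟩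
  · simp only [prodPmf, ← prod_univ_sum, hPA, prod_const_one]
  · exact disjoint_left.2 fun x hxA hxW =>
      disjoint_left.1 hAW (Fintype.mem_piFinset.1 hxA i₀) (mem_image_of_mem _ hxW)

theorem minimaxRedundancy_envClass_eq_top (hf0 : ∀ k, 0 ≤ f k) (hns : ¬ Summable f) {n : ℕ}
    (hn : 1 ≤ n) : minimaxRedundancy (envClass f) n = ⊤ := by
  refine eq_top_iff.2 <| le_iInf₂ fun Q hQ =>
    top_le_iff.2 <| ENNReal.eq_top_of_forall_nnreal_le fun r => ?_
  set ε := exp (-(r * log 2 + 1))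
  obtain ⟨P, hP, E, hPE, hQE⟩ :=
    exists_mem_envClass_sum_prodPmf_eq_one_sum_lt hf0 hns hn hQ.2.summable (exp_pos _)
  calc (r : ℝ≥0∞) = ENNReal.ofReal ((-log ε - 1) / log 2) := by
        rw [log_exp, neg_neg, add_sub_cancel_right, mul_div_cancel_right₀ _
          (log_pos one_lt_two).ne', ENNReal.ofReal_coe_nnreal]
    _ ≤ klDiv2 (prodPmf P n) Q :=
        le_klDiv2_of_sum_le (prodPmf_nonneg hP.1.1 n) hQ.1 hPE hQE.le
    _ ≤ ⨆ P ∈ envClass f, klDiv2 (prodPmf P n) Q := le_iSup₂_of_le P hP le_rfl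

end Envelope

/-- for envelope classes, minimax redundancy and minimax regret are
either both finite or both infinite. -/
theorem stmt7 (f : ℕ+ → ℝ) (hf : ∀ k, 0 ≤ f k ∧ f k ≤ 1) (n : ℕ) (hn : 1 ≤ n) :
    minimaxRedundancy (envClass f) n < ⊤ ↔ minimaxRegret (envClass f) n < ⊤ := by
  have hf0 : ∀ k, 0 ≤ f k := fun k => (hf k).1
  constructor
  · intro hR
    have hs : Summable f := by
      by_contra hns
      exact (minimaxRedundancy_envClass_eq_top hf0 hns hn ▸ hR).ne rfl
    exact minimaxRegret_envClass_lt_top hf0 hs n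
  · intro hR
    refine (minimaxRedundancy_le_minimaxRegret_add (fun P hP => hP.1) n).trans_lt ?_
    exact ENNReal.add_lt_top.2 ⟨hR, ENNReal.inv_lt_top.2 (by simpa using log_pos one_lt_two)⟩
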